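/- Let q be a prime power, R a finite field that is an 𝔽_q-algebra, t ∈ R nonzero, and G = SL_3(R). Let d be a natural number with d + 1 ≤ q. Then the 𝔽_q-dimension of the linear space of (d,d,d)-codewords f : G → 𝔽_q is at least |G| · (3(d+1) − 2q)/q; in particular this space is nonzero whenever 3(d+1) > 2q. -/

import Mathlib

/-!
Each `hᵢ` is an injective homomorphism `(𝔽_q, +) → G`, and the degree-`≤ d` condition is
invariant under translation of `α`. So the condition along direction `i` needs checking only at
one representative `g` of each left coset of `Hᵢ = hᵢ(𝔽_q)`: it cuts out a subspace of
codimension at most `|G/Hᵢ| (q - (d + 1)) = |G| (q - d - 1) / q` in the `|G|`-dimensional space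
`G → 𝔽_q`, i.e. of dimension at least `|G| (d + 1) / q`. The code is the intersection of three
such subspaces, so its dimension is at least `3 |G| (d + 1) / q - 2 |G|`.
-/

open Matrix Polynomial

/-- The 3×3 elementary (transvection) matrix `e_{ij}(α) = I + α·E_{ij}`. -/
def elemMat {R : Type*} [CommRing R] (i j : Fin 3) (α : R) : Matrix (Fin 3) (Fin 3) R :=
  1 + Matrix.single i j α

theorem elemMat_det {R : Type*} [CommRing R] (i j : Fin 3) (hij : i ≠ j) (α : R) :
    (elemMat i j α).det = 1 := by
  fin_cases i <;> fin_cases j <;>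
    simp_all [elemMat, Matrix.det_fin_three, Matrix.single, Matrix.one_apply]

/-- The elementary matrix `e_{ij}(α)` as an element of `SL₃(R)` (for `i ≠ j`). -/
def elemSL {R : Type*} [CommRing R] (i j : Fin 3) (hij : i ≠ j) (α : R) :
    Matrix.SpecialLinearGroup (Fin 3) R :=
  ⟨elemMat i j α, elemMat_det i j hij α⟩

/-- `h₁(α) = e₃₁(αt)` for `α ∈ F`, with `F` an `R`-algebra. -/
def hGen₁ {F R : Type*} [Field F] [Field R] [Algebra F R] (t : R) (α : F) :
    Matrix.SpecialLinearGroup (Fin 3) R :=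
  elemSL 2 0 (by decide) (algebraMap F R α * t)

/-- `h₂(α) = e₁₂(αt)`. -/
def hGen₂ {F R : Type*} [Field F] [Field R] [Algebra F R] (t : R) (α : F) :
    Matrix.SpecialLinearGroup (Fin 3) R :=
  elemSL 0 1 (by decide) (algebraMap F R α * t)

/-- `h₃(α) = e₂₃(αt)`. -/
def hGen₃ {F R : Type*} [Field F] [Field R] [Algebra F R] (t : R) (α : F) :
    Matrix.SpecialLinearGroup (Fin 3) R :=
  elemSL 1 2 (by decide) (algebraMap F R α * t)

/-- A function `g : F → F` has degree at most `d` if it agrees with (the evaluation of)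
a univariate polynomial of degree at most `d`. -/
def DegLE {F : Type*} [CommRing F] (d : ℕ) (g : F → F) : Prop :=
  ∃ P : Polynomial F, P.natDegree ≤ d ∧ ∀ x, g x = P.eval x

/-- `f : SL₃(R) → F` is a `(d₁,d₂,d₃)`-codeword: along every coset line `α ↦ g·hᵢ(α)`
the function has degree at most `dᵢ`. -/
def IsCodeword {F R : Type*} [Field F] [Field R] [Algebra F R] (t : R) (d₁ d₂ d₃ : ℕ)
    (f : Matrix.SpecialLinearGroup (Fin 3) R → F) : Prop :=
  ∀ g : Matrix.SpecialLinearGroup (Fin 3) R,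
    DegLE d₁ (fun α => f (g * hGen₁ t α)) ∧
    DegLE d₂ (fun α => f (g * hGen₂ t α)) ∧
    DegLE d₃ (fun α => f (g * hGen₃ t α))

theorem DegLE.add {F : Type*} [CommRing F] {d : ℕ} {g h : F → F}
    (hg : DegLE d g) (hh : DegLE d h) : DegLE d (fun x => g x + h x) := by
  obtain ⟨P, hP, hPe⟩ := hg
  obtain ⟨Q, hQ, hQe⟩ := hh
  exact ⟨P + Q, le_trans (Polynomial.natDegree_add_le P Q) (max_le hP hQ),
    fun x => by simp [hPe, hQe]⟩

theorem DegLE.smul {F : Type*} [CommRing F] {d : ℕ} (c : F) {g : F → F}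
    (hg : DegLE d g) : DegLE d (fun x => c * g x) := by
  obtain ⟨P, hP, hPe⟩ := hg
  exact ⟨Polynomial.C c * P, le_trans (Polynomial.natDegree_C_mul_le c P) hP,
    fun x => by simp [hPe]⟩

/-- The space of `(d,d,d)`-codewords `SL₃(R) → F` as an `F`-linear subspace. -/
def codeSpace {F R : Type*} [Field F] [Field R] [Algebra F R] (t : R) (d : ℕ) :
    Submodule F (Matrix.SpecialLinearGroup (Fin 3) R → F) where
  carrier := {f | IsCodeword t d d d f}
  add_mem' := by
    intro f f' hf hf' g
    exact ⟨((hf g).1).add ((hf' g).1), ((hf g).2.1).add ((hf' g).2.1),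
      ((hf g).2.2).add ((hf' g).2.2)⟩
  zero_mem' := fun g => ⟨⟨0, by simp⟩, ⟨0, by simp⟩, ⟨0, by simp⟩⟩
  smul_mem' := by
    intro c f hf g
    exact ⟨((hf g).1).smul c, ((hf g).2.1).smul c, ((hf g).2.2).smul c⟩

open Module

theorem Submodule.finrank_add_finrank_le_finrank_inf_add {K V : Type*} [DivisionRing K]
    [AddCommGroup V] [Module K V] [FiniteDimensional K V] (s t : Submodule K V) :
    finrank K s + finrank K t ≤ finrank K ↥(s ⊓ t) + finrank K V := by
  rw [← Submodule.finrank_sup_add_finrank_inf_eq, add_comm]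
  exact Nat.add_le_add_left (Submodule.finrank_le _) _

section Transvection

variable {R : Type*} [CommRing R] {i j : Fin 3}

theorem elemSL_add (hij : i ≠ j) (a b : R) :
    elemSL i j hij (a + b) = elemSL i j hij a * elemSL i j hij b := by
  have hsq : Matrix.single i j a * Matrix.single i j b = 0 :=
    Matrix.single_mul_single_of_ne (h := hij.symm) ..
  refine Subtype.ext ?_
  change 1 + Matrix.single i j (a + b) = (1 + Matrix.single i j a) * (1 + Matrix.single i j b)
  rw [Matrix.single_add, mul_add, add_mul, add_mul, hsq, one_mul, one_mul, mul_one]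
  abel

theorem elemSL_injective (hij : i ≠ j) : Function.Injective (elemSL (R := R) i j hij) := by
  intro a b h
  simpa [elemSL, elemMat, Matrix.one_apply, hij] using
    congrArg (fun g : Matrix.SpecialLinearGroup (Fin 3) R => (g : Matrix (Fin 3) (Fin 3) R) i j) h

end Transvection

section LineCode

variable {G A K : Type*} [Group G] [Field K]

def lineCode (φ : A → G) (W : Submodule K (A → K)) : Submodule K (G → K) :=
  ⨅ g : G, W.comap (LinearMap.funLeft K K fun a => g * φ a)

theorem mem_lineCode {φ : A → G} {W : Submodule K (A → K)} {f : G → K} :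
    f ∈ lineCode φ W ↔ ∀ g, (fun a => f (g * φ a)) ∈ W := by
  simp [lineCode, Submodule.mem_iInf, LinearMap.funLeft, Function.comp_def]

variable [AddGroup A]

def lineSubgroup (φ : A → G) (hφ : ∀ a b, φ (a + b) = φ a * φ b) : Subgroup G :=
  (MonoidHom.mk' (fun a : Multiplicative A => φ a.toAdd) hφ).range

variable {φ : A → G} {W : Submodule K (A → K)}

theorem mem_lineSubgroup (hφ : ∀ a b, φ (a + b) = φ a * φ b) {g : G} :
    g ∈ lineSubgroup φ hφ ↔ ∃ a, φ a = g :=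
  ⟨fun ⟨a, ha⟩ => ⟨a.toAdd, ha⟩, fun ⟨a, ha⟩ => ⟨Multiplicative.ofAdd a, ha⟩⟩

theorem card_lineSubgroup (hφ : ∀ a b, φ (a + b) = φ a * φ b) (hinj : Function.Injective φ) :
    Nat.card (lineSubgroup φ hφ) = Nat.card A :=
  (Nat.card_congr (MonoidHom.ofInjective (f := MonoidHom.mk' _ hφ)
    (hinj.comp Multiplicative.toAdd.injective)).toEquiv).symm.trans
    (Nat.card_congr Multiplicative.toAdd)

theorem mem_lineCode_of_forall_out (hφ : ∀ a b, φ (a + b) = φ a * φ b)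
    (hW : ∀ w ∈ W, ∀ b, (fun a => w (b + a)) ∈ W) {f : G → K}
    (hf : ∀ c : G ⧸ lineSubgroup φ hφ, (fun a => f (c.out * φ a)) ∈ W) :
    f ∈ lineCode φ W := by
  refine mem_lineCode.2 fun g => ?_
  obtain ⟨h, hgh⟩ := QuotientGroup.mk_out_eq_mul (lineSubgroup φ hφ) g
  obtain ⟨b, hb⟩ := (mem_lineSubgroup hφ).1 (inv_mem h.2)
  have hshift : (fun a => f (g * φ a)) =
      fun a => (fun a => f ((g : G ⧸ lineSubgroup φ hφ).out * φ a)) (b + a) := by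
    funext a
    simp only [hgh, hφ, hb, mul_assoc, mul_inv_cancel_left]
  rw [hshift]
  exact hW _ (hf _) b

theorem card_le_finrank_lineCode_add [Finite G] [Finite A]
    (hφ : ∀ a b, φ (a + b) = φ a * φ b)
    (hW : ∀ w ∈ W, ∀ b, (fun a => w (b + a)) ∈ W) :
    Nat.card G ≤ finrank K (lineCode φ W) +
      Nat.card (G ⧸ lineSubgroup φ hφ) * finrank K ((A → K) ⧸ W) := by
  have := Fintype.ofFinite G
  have := Fintype.ofFinite A
  have := Fintype.ofFinite (G ⧸ lineSubgroup φ hφ)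
  let Φ : (G → K) →ₗ[K] (G ⧸ lineSubgroup φ hφ → (A → K) ⧸ W) :=
    LinearMap.pi fun c => W.mkQ ∘ₗ LinearMap.funLeft K K fun a => c.out * φ a
  have hker : LinearMap.ker Φ ≤ lineCode φ W := fun f hf =>
    mem_lineCode_of_forall_out hφ hW fun c => by
      simpa [Φ, Submodule.Quotient.mk_eq_zero, LinearMap.funLeft, Function.comp_def] using
        congrFun hf c
  calc Nat.card G = finrank K (LinearMap.range Φ) + finrank K (LinearMap.ker Φ) := by
        rw [LinearMap.finrank_range_add_finrank_ker, finrank_fintype_fun_eq_card,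
          Nat.card_eq_fintype_card]
    _ ≤ finrank K (G ⧸ lineSubgroup φ hφ → (A → K) ⧸ W) + finrank K (lineCode φ W) :=
        add_le_add (Submodule.finrank_le _) (Submodule.finrank_mono hker)
    _ = _ := by
        rw [finrank_pi_fintype, Finset.sum_const, Finset.card_univ, smul_eq_mul,
          Nat.card_eq_fintype_card, add_comm]

theorem card_mul_finrank_le_finrank_lineCode_mul [Finite G] [Fintype A]
    (hφ : ∀ a b, φ (a + b) = φ a * φ b) (hinj : Function.Injective φ)
    (hW : ∀ w ∈ W, ∀ b, (fun a => w (b + a)) ∈ W) :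
    Nat.card G * finrank K W ≤ finrank K (lineCode φ W) * Nat.card A := by
  have hcount := card_le_finrank_lineCode_add hφ hW
  have hLagrange : Nat.card (G ⧸ lineSubgroup φ hφ) * Nat.card A = Nat.card G := by
    rw [← card_lineSubgroup hφ hinj]
    exact (Subgroup.card_eq_card_quotient_mul_card_subgroup _).symm
  have hcodim : finrank K ((A → K) ⧸ W) + finrank K W = Nat.card A := by
    rw [Submodule.finrank_quotient_add_finrank, finrank_fintype_fun_eq_card,
      Nat.card_eq_fintype_card]
  refine Nat.le_of_add_le_add_right (b := Nat.card G * finrank K ((A → K) ⧸ W)) ?_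
  calc Nat.card G * finrank K W + Nat.card G * finrank K ((A → K) ⧸ W)
      = Nat.card G * Nat.card A := by rw [← hcodim]; ring
    _ ≤ (finrank K (lineCode φ W) +
          Nat.card (G ⧸ lineSubgroup φ hφ) * finrank K ((A → K) ⧸ W)) * Nat.card A :=
        Nat.mul_le_mul_right _ hcount
    _ = finrank K (lineCode φ W) * Nat.card A + Nat.card G * finrank K ((A → K) ⧸ W) := by
        rw [← hLagrange]; ring

end LineCode

section DegreeSpace

variable {K : Type*} [Field K] {d : ℕ}

variable (K) in
noncomputable def degLESpace (d : ℕ) : Submodule K (K → K) :=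
  (Polynomial.degreeLE K d).map (LinearMap.pi Polynomial.leval)

theorem mem_degLESpace {g : K → K} : g ∈ degLESpace K d ↔ DegLE d g := by
  simp only [degLESpace, Submodule.mem_map, Polynomial.mem_degreeLE,
    ← Polynomial.natDegree_le_iff_degree_le, DegLE, funext_iff, LinearMap.pi_apply,
    Polynomial.leval_apply]
  exact exists_congr fun P => and_congr_right fun _ => forall_congr' fun x => eq_comm

theorem DegLE.comp_add_left {g : K → K} (hg : DegLE d g) (b : K) :
    DegLE d (fun a => g (b + a)) := by
  obtain ⟨P, hP, hPg⟩ := hg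
  refine ⟨P.comp (Polynomial.C b + Polynomial.X), ?_, fun a => ?_⟩
  · rwa [Polynomial.natDegree_comp, add_comm, Polynomial.natDegree_X_add_C, mul_one]
  · simp [hPg]

theorem finrank_degLESpace [Fintype K] (hd : d + 1 ≤ Fintype.card K) :
    finrank K (degLESpace K d) = d + 1 := by
  have hinj : Function.Injective
      (LinearMap.pi Polynomial.leval ∘ₗ (Polynomial.degreeLE K d).subtype) := by
    rw [← LinearMap.ker_eq_bot, LinearMap.ker_eq_bot']
    rintro ⟨P, hP⟩ hPzero
    have hdeg : P.natDegree < Fintype.card K :=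
      (Polynomial.natDegree_le_iff_degree_le.2 (Polynomial.mem_degreeLE.1 hP)).trans_lt hd
    exact Subtype.ext (Polynomial.eq_zero_of_natDegree_lt_card_of_eval_eq_zero P
      Function.injective_id (fun x => congrFun hPzero x) hdeg)
  rw [degLESpace, ← Submodule.range_subtype (Polynomial.degreeLE K d), ← LinearMap.range_comp,
    LinearMap.finrank_range_of_inj hinj, ← Polynomial.degreeLT_succ_eq_degreeLE,
    (Polynomial.degreeLTEquiv K (d + 1)).finrank_eq, finrank_fin_fun]

end DegreeSpace

section Codewords

variable {F R : Type*} [Field F] [Field R] [Algebra F R]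

theorem codeSpace_eq_inf (t : R) (d : ℕ) :
    codeSpace (F := F) t d = lineCode (hGen₁ t) (degLESpace F d) ⊓
      lineCode (hGen₂ t) (degLESpace F d) ⊓ lineCode (hGen₃ t) (degLESpace F d) := by
  ext f
  change IsCodeword t d d d f ↔ _
  simp only [IsCodeword, Submodule.mem_inf, mem_lineCode, mem_degLESpace]
  exact ⟨fun hf => ⟨⟨fun g => (hf g).1, fun g => (hf g).2.1⟩, fun g => (hf g).2.2⟩,
    fun ⟨⟨h₁, h₂⟩, h₃⟩ g => ⟨h₁ g, h₂ g, h₃ g⟩⟩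

variable [Fintype F] [Finite R] {t : R} {d : ℕ}

theorem card_mul_succ_le_finrank_lineCode_elemSL (ht : t ≠ 0) {i j : Fin 3} (hij : i ≠ j)
    (hd : d + 1 ≤ Fintype.card F) :
    Nat.card (Matrix.SpecialLinearGroup (Fin 3) R) * (d + 1) ≤
      finrank F (lineCode (fun α : F => elemSL i j hij (algebraMap F R α * t))
        (degLESpace F d)) * Fintype.card F := by
  rw [← finrank_degLESpace hd, ← Nat.card_eq_fintype_card]
  refine card_mul_finrank_le_finrank_lineCode_mul (fun a b => ?_) ?_ fun w hw b => ?_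
  · rw [map_add, add_mul, elemSL_add]
  · exact (elemSL_injective hij).comp ((mul_left_injective₀ ht).comp (algebraMap F R).injective)
  · exact mem_degLESpace.2 ((mem_degLESpace.1 hw).comp_add_left b)

theorem card_mul_succ_le_finrank_codeSpace (ht : t ≠ 0) (hd : d + 1 ≤ Fintype.card F) :
    3 * (Nat.card (Matrix.SpecialLinearGroup (Fin 3) R) * (d + 1)) ≤
      (finrank F (codeSpace (F := F) t d) +
        2 * Nat.card (Matrix.SpecialLinearGroup (Fin 3) R)) * Fintype.card F := by
  have := Fintype.ofFinite (Matrix.SpecialLinearGroup (Fin 3) R)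
  have h₁ : _ ≤ finrank F (lineCode (hGen₁ t) (degLESpace F d)) * _ :=
    card_mul_succ_le_finrank_lineCode_elemSL ht (i := 2) (j := 0) (by decide) hd
  have h₂ : _ ≤ finrank F (lineCode (hGen₂ t) (degLESpace F d)) * _ :=
    card_mul_succ_le_finrank_lineCode_elemSL ht (i := 0) (j := 1) (by decide) hd
  have h₃ : _ ≤ finrank F (lineCode (hGen₃ t) (degLESpace F d)) * _ :=
    card_mul_succ_le_finrank_lineCode_elemSL ht (i := 1) (j := 2) (by decide) hd
  have h₁₂ := Submodule.finrank_add_finrank_le_finrank_inf_add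
    (lineCode (hGen₁ t) (degLESpace F d)) (lineCode (hGen₂ t) (degLESpace F d))
  have h₁₂₃ := Submodule.finrank_add_finrank_le_finrank_inf_add
    (lineCode (hGen₁ t) (degLESpace F d) ⊓ lineCode (hGen₂ t) (degLESpace F d))
    (lineCode (hGen₃ t) (degLESpace F d))
  rw [finrank_fintype_fun_eq_card, ← Nat.card_eq_fintype_card] at h₁₂ h₁₂₃
  rw [codeSpace_eq_inf]
  linarith [Nat.mul_le_mul_right (Fintype.card F) h₁₂,
    Nat.mul_le_mul_right (Fintype.card F) h₁₂₃]

end Codewords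

/-- **Rate of the global code by constraint counting.** For `R` a finite field that is an
`𝔽_q`-algebra, `t ≠ 0` and `d + 1 ≤ q`, the `𝔽_q`-dimension of the space of
`(d,d,d)`-codewords `f : SL₃(R) → 𝔽_q` is at least `|SL₃(R)|·(3(d+1) − 2q)/q`; in
particular this space is nonzero whenever `3(d+1) > 2q`. -/
theorem codeSpace_finrank_ge {F R : Type*} [Field F] [Fintype F] [Field R] [Fintype R]
    [Algebra F R] (t : R) (ht : t ≠ 0) (d : ℕ) (hd : d + 1 ≤ Fintype.card F) :
    ((Nat.card (Matrix.SpecialLinearGroup (Fin 3) R) : ℝ) *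
        (3 * ((d : ℝ) + 1) - 2 * (Fintype.card F : ℝ)) / (Fintype.card F : ℝ)
      ≤ (Module.finrank F (codeSpace (F := F) t d) : ℝ)) ∧
    (2 * Fintype.card F < 3 * (d + 1) → codeSpace (F := F) t d ≠ ⊥) := by
  set N := Nat.card (Matrix.SpecialLinearGroup (Fin 3) R)
  set q := Fintype.card F
  have hcount : 3 * ((N : ℝ) * ((d : ℝ) + 1)) ≤
      (finrank F (codeSpace (F := F) t d) + 2 * N) * (q : ℝ) := by
    exact_mod_cast card_mul_succ_le_finrank_codeSpace ht hd
  have hq : (0 : ℝ) < q := Nat.cast_pos.2 Fintype.card_pos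
  have hbound :
      (N : ℝ) * (3 * ((d : ℝ) + 1) - 2 * q) / q ≤ finrank F (codeSpace (F := F) t d) :=
    (div_le_iff₀ hq).2 (by linarith)
  refine ⟨hbound, fun hlt hbot => ?_⟩
  have hN : (0 : ℝ) < N := Nat.cast_pos.2 Nat.card_pos
  have hlt' : (2 * q : ℝ) < 3 * ((d : ℝ) + 1) := by exact_mod_cast hlt
  rw [hbot, finrank_bot, Nat.cast_zero] at hbound
  exact hbound.not_gt (div_pos (mul_pos hN (by linarith)) hq)
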